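/- arXiv:1607.07803 — 3 statements merged into one kernel-verified Lean document; each statement's English description precedes it below -/
import Mathlib

section
/- Let (X,d,μ) be a metric measure space in which every ball has finite measure, satisfying non-degeneracy of balls (Axiom NDB) and the weak annular decay property (Axiom WAD), and let ℋ ⊆ L²(X,μ) be a reproducing kernel Hilbert space with kernel k satisfying the diagonal condition (Axiom D), weak localization (Axiom WL), and the homogeneous approximation property (Axiom HAP). If Λ ⊆ X is a set of stable sampling for ℋ (A‖f‖² ≤ Σ_{λ∈Λ} |f(λ)|² ≤ B‖f‖² for all f ∈ ℋ with A,B>0), then liminf_{r→∞} inf_{x∈X} #(Λ ∩ B_r(x)) / ∫_{B_r(x)} k(y,y) dμ(y) ≥ 1. -/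
open MeasureTheory Metric Filter Topology ENNReal

noncomputable section

/-- A reproducing kernel Hilbert space of functions contained in `L²(X,μ)`,
described by its carrier set of functions and its reproducing kernel `k`:
each `k_x = k(·,x)` belongs to the space and `f x = ⟨f, k_x⟩` (the `L²` inner
product) for every member `f`. -/
structure L2RKHS (X : Type*) [MeasurableSpace X] (μ : MeasureTheory.Measure X) where
  carrier : Set (X → ℂ)
  k : X → X → ℂ
  memL2 : ∀ f ∈ carrier, MemLp f 2 μ
  add_mem : ∀ f ∈ carrier, ∀ g ∈ carrier, f + g ∈ carrier
  smul_mem : ∀ (c : ℂ), ∀ f ∈ carrier, c • f ∈ carrier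
  kernel_mem : ∀ x : X, (fun y => k y x) ∈ carrier
  reproducing : ∀ f ∈ carrier, ∀ x : X, f x = ∫ y, f y * (starRingEnd ℂ) (k y x) ∂μ

variable {X : Type*} [MeasurableSpace X] [MetricSpace X]

/-- Every ball has finite measure. -/
def FiniteBalls (μ : Measure X) : Prop := ∀ (x : X) (r : ℝ), μ (ball x r) ≠ ∞

/-- Axiom (NDB): non-degeneracy of balls. -/
def NDB (μ : Measure X) : Prop := ∃ r : ℝ, 0 < r ∧ 0 < ⨅ x : X, μ (ball x r)

/-- Axiom (WAD): the weak annular decay property. -/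
def WAD (μ : Measure X) : Prop :=
  Tendsto (fun r : ℝ => ⨆ x : X, μ (ball x (r + 1) \ ball x r) / μ (ball x r)) atTop (𝓝 0)

/-- The lower Beurling density `D⁻(Λ)`. -/
def lowerDensity (μ : Measure X) (Λ : Set X) : ℝ≥0∞ :=
  liminf (fun r : ℝ => ⨅ x : X, Measure.count (Λ ∩ ball x r) / μ (ball x r)) atTop

/-- The upper Beurling density `D⁺(Λ)`. -/
def upperDensity (μ : Measure X) (Λ : Set X) : ℝ≥0∞ :=
  limsup (fun r : ℝ => ⨆ x : X, Measure.count (Λ ∩ ball x r) / μ (ball x r)) atTop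

/-- The lower averaged trace `tr⁻(k)` of a reproducing kernel. -/
def lowerTrace (μ : Measure X) (k : X → X → ℂ) : ℝ≥0∞ :=
  liminf (fun r : ℝ =>
    ⨅ x : X, (∫⁻ y in ball x r, ENNReal.ofReal ((k y y).re) ∂μ) / μ (ball x r)) atTop

/-- The upper averaged trace `tr⁺(k)` of a reproducing kernel. -/
def upperTrace (μ : Measure X) (k : X → X → ℂ) : ℝ≥0∞ :=
  limsup (fun r : ℝ =>
    ⨆ x : X, (∫⁻ y in ball x r, ENNReal.ofReal ((k y y).re) ∂μ) / μ (ball x r)) atTop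

variable {μ : Measure X}

/-- Axiom (D): two-sided bounds on the diagonal of the kernel. -/
def L2RKHS.AxiomD (H : L2RKHS X μ) : Prop :=
  ∃ C₁ C₂ : ℝ, 0 < C₁ ∧ 0 < C₂ ∧ ∀ x : X, C₁ ≤ (H.k x x).re ∧ (H.k x x).re ≤ C₂

/-- Axiom (WL): weak localization of the kernel. -/
def L2RKHS.WL (H : L2RKHS X μ) : Prop :=
  ∀ ε : ℝ, 0 < ε → ∃ r : ℝ, ∀ x : X,
    (∫⁻ y in (ball x r)ᶜ, (‖H.k x y‖₊ : ℝ≥0∞) ^ 2 ∂μ) < ENNReal.ofReal (ε ^ 2)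

/-- `{k_λ : λ ∈ Λ}` is a Bessel sequence for `H`. -/
def L2RKHS.Bessel (H : L2RKHS X μ) (Λ : Set X) : Prop :=
  ∃ C : ℝ, 0 < C ∧ ∀ f ∈ H.carrier,
    ∑' lam : Λ, (‖f lam‖₊ : ℝ≥0∞) ^ 2 ≤
      ENNReal.ofReal C * ∫⁻ y, (‖f y‖₊ : ℝ≥0∞) ^ 2 ∂μ

/-- Axiom (HAP): the homogeneous approximation property. -/
def L2RKHS.HAP (H : L2RKHS X μ) : Prop :=
  ∀ Λ : Set X, H.Bessel Λ → ∀ ε : ℝ, 0 < ε → ∃ r : ℝ, ∀ x : X,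
    ∑' lam : ↥(Λ \ ball x r), (‖H.k x lam‖₊ : ℝ≥0∞) ^ 2 < ENNReal.ofReal (ε ^ 2)

/-- `Λ` is a set of stable sampling for `H`. -/
def L2RKHS.Sampling (H : L2RKHS X μ) (Λ : Set X) : Prop :=
  ∃ A B : ℝ, 0 < A ∧ 0 < B ∧ ∀ f ∈ H.carrier,
    ENNReal.ofReal A * (∫⁻ y, (‖f y‖₊ : ℝ≥0∞) ^ 2 ∂μ) ≤ ∑' lam : Λ, (‖f lam‖₊ : ℝ≥0∞) ^ 2 ∧
    ∑' lam : Λ, (‖f lam‖₊ : ℝ≥0∞) ^ 2 ≤ ENNReal.ofReal B * ∫⁻ y, (‖f y‖₊ : ℝ≥0∞) ^ 2 ∂μ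

/-- `{k_λ : λ ∈ Λ}` is a Riesz sequence in `H` (equivalently stated via finitely
supported coefficient sequences). -/
def L2RKHS.RieszSeq (H : L2RKHS X μ) (Λ : Set X) : Prop :=
  ∃ A B : ℝ, 0 < A ∧ 0 < B ∧ ∀ (F : Finset Λ) (c : Λ → ℂ),
    A * ∑ lam ∈ F, ‖c lam‖ ^ 2 ≤ (∫ y, ‖∑ lam ∈ F, c lam * H.k y lam‖ ^ 2 ∂μ) ∧
    (∫ y, ‖∑ lam ∈ F, c lam * H.k y lam‖ ^ 2 ∂μ) ≤ B * ∑ lam ∈ F, ‖c lam‖ ^ 2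

/-- `Λ` is relatively separated. -/
def RelSeparated (μ : Measure X) (Λ : Set X) : Prop :=
  ∃ ρ₀ : ℝ, 0 < ρ₀ ∧ ∀ ρ : ℝ, ρ₀ ≤ ρ → ∃ C : ℝ, 0 < C ∧ ∀ x : X,
    Measure.count (Λ ∩ ball x ρ) ≤ ENNReal.ofReal C * μ (ball x ρ)

/-!
The kernel functions `k_λ`, `λ ∈ Λ`, form a frame of the closure of `H` in `L²`, so the frame
operator `S = T† T` (`T` the analysis operator) is invertible. Fix a ball `B_r(x)` and let `W` be
the span of the dual frame vectors `S⁻¹ k_λ` with `λ ∈ B_{r+s}(x)`, so that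
`dim W ≤ #(Λ ∩ B_{r+s}(x))`. For `z ∈ B_r(x)`, truncating `T k_z` to these `λ` produces a vector
of `W` whose distance to `k_z` is at most `√B ε / A`, where `ε²` bounds the HAP tail outside
`B_s(z)`. With `(e_j)` an orthonormal basis of `W` this gives
`k(z,z) = ‖k_z‖² ≤ ∑ⱼ |e_j(z)|² + B ε² / A²`, and integrating over the ball,
`∫_{B_r(x)} k(z,z) dμ(z) ≤ #(Λ ∩ B_{r+s}(x)) + (B ε² / A²) μ(B_r(x))`.
By Axiom D the error term is a small fraction of the trace, and by WAD so is the trace over the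
annulus `B_{r+s}(x) \ B_r(x)`.
-/

open scoped InnerProductSpace InnerProduct lp NNReal

theorem lp.norm_sq_eq_tsum {ι E : Type*} [NormedAddCommGroup E] (f : ℓ²(ι, E)) :
    ‖f‖ ^ 2 = ∑' i, ‖f i‖ ^ 2 := by
  simpa using lp.norm_rpow_eq_tsum (p := 2) (by norm_num) f

theorem ENNReal.one_sub_le_div_of_le_add {a b ε : ℝ≥0∞} (h : b ≤ a + ε * b) (hb0 : b ≠ 0)
    (hb : b ≠ ∞) : 1 - ε ≤ a / b := by
  rw [ENNReal.le_div_iff_mul_le (Or.inl hb0) (Or.inl hb), ENNReal.sub_mul fun _ _ ↦ hb, one_mul,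
    tsub_le_iff_right]
  exact h

theorem Metric.ball_diff_ball_subset_biUnion {Y : Type*} [PseudoMetricSpace Y] (x : Y)
    (ρ s : ℝ) :
    ball x ρ \ ball x (ρ - s) ⊆
      ⋃ i ∈ Finset.range ⌈s⌉₊, ball x (ρ - s + i + 1) \ ball x (ρ - s + i) := by
  rintro y ⟨hy, hy'⟩
  rw [mem_ball] at hy
  rw [mem_ball, not_lt] at hy'
  have ha : 0 ≤ dist y x - (ρ - s) := by linarith
  refine Set.mem_biUnion (x := ⌊dist y x - (ρ - s)⌋₊) ?_ ⟨?_, ?_⟩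
  · rw [Finset.mem_coe, Finset.mem_range, Nat.floor_lt ha]
    linarith [Nat.le_ceil s]
  · rw [mem_ball]
    linarith [Nat.lt_floor_add_one (dist y x - (ρ - s))]
  · rw [mem_ball, not_lt]
    linarith [Nat.floor_le ha]

namespace MeasureTheory

theorem Measure.encard_le_count {α : Type*} [MeasurableSpace α] (s : Set α) :
    s.encard ≤ Measure.count s :=
  ENNReal.tsum_set_one s ▸ Measure.le_count_apply

theorem Lp.lintegral_enorm_sq {α E : Type*} [MeasurableSpace α] {ν : Measure α}
    [NormedAddCommGroup E] (F : Lp E 2 ν) : ∫⁻ z, ‖F z‖ₑ ^ 2 ∂ν = ENNReal.ofReal (‖F‖ ^ 2) := by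
  have h := eLpNorm_nnreal_pow_eq_lintegral (f := F) (μ := ν) (p := 2) two_ne_zero
  norm_num at h
  rw [← h, Lp.norm_def, ENNReal.ofReal_pow ENNReal.toReal_nonneg,
    ENNReal.ofReal_toReal (Lp.eLpNorm_ne_top F)]

theorem setLIntegral_le_add_mul_measure_diff {α : Type*} [MeasurableSpace α] {ν : Measure α}
    {f : α → ℝ≥0∞} {C : ℝ≥0∞} (hf : ∀ x, f x ≤ C) (s t : Set α) :
    ∫⁻ x in s, f x ∂ν ≤ ∫⁻ x in t, f x ∂ν + C * ν (s \ t) := by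
  have hν : ν.restrict s ≤ ν.restrict t + ν.restrict (s \ t) :=
    (Measure.restrict_mono (by simp) le_rfl).trans (Measure.restrict_union_le t (s \ t))
  calc ∫⁻ x in s, f x ∂ν ≤ ∫⁻ x, f x ∂(ν.restrict t + ν.restrict (s \ t)) :=
        lintegral_mono' hν le_rfl
    _ = ∫⁻ x in t, f x ∂ν + ∫⁻ x in s \ t, f x ∂ν := lintegral_add_measure _ _ _
    _ ≤ ∫⁻ x in t, f x ∂ν + C * ν (s \ t) := by
        gcongr
        exact (lintegral_mono hf).trans_eq (setLIntegral_const _ _)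

theorem mul_measure_le_setLIntegral {α : Type*} [MeasurableSpace α] {ν : Measure α}
    {f : α → ℝ≥0∞} {c : ℝ≥0∞} (hf : ∀ x, c ≤ f x) (s : Set α) : c * ν s ≤ ∫⁻ x in s, f x ∂ν :=
  (setLIntegral_const s c).symm.trans_le (lintegral_mono hf)

end MeasureTheory

theorem norm_sq_le_sum_norm_inner_sq_add_norm_sub_sq {𝕜 E ι : Type*} [RCLike 𝕜]
    [NormedAddCommGroup E] [InnerProductSpace 𝕜 E] {K : Submodule 𝕜 E} [FiniteDimensional 𝕜 K]
    [Fintype ι] (b : OrthonormalBasis ι 𝕜 K) (x : E) {w : E} (hw : w ∈ K) :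
    ‖x‖ ^ 2 ≤ ∑ j, ‖⟪(b j : E), x⟫_𝕜‖ ^ 2 + ‖x - w‖ ^ 2 := by
  have hmin : ‖x - K.starProjection x‖ ≤ ‖x - w‖ := by
    rw [K.starProjection_minimal]
    exact ciInf_le ⟨0, Set.forall_mem_range.2 fun _ ↦ norm_nonneg _⟩ (⟨w, hw⟩ : K)
  rw [K.norm_sq_eq_add_norm_sq_projection x, ← b.sum_sq_norm_inner_right]
  simp only [Submodule.inner_orthogonalProjectionOnto_eq_of_mem_left]
  gcongr
  simpa using hmin

section Frame

variable {E : Type*} [NormedAddCommGroup E] [InnerProductSpace ℂ E]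
  {ι : Type*} {φ : ι → E} {A B : ℝ}
  (hφ : ∀ x (s : Finset ι), ∑ i ∈ s, ‖⟪φ i, x⟫_ℂ‖ ^ 2 ≤ B * ‖x‖ ^ 2)

include hφ in
theorem summable_norm_inner_sq (x : E) : Summable fun i ↦ ‖⟪φ i, x⟫_ℂ‖ ^ 2 :=
  summable_of_sum_le (fun _ ↦ sq_nonneg _) (hφ x)

def analysisOp : E →L[ℂ] ℓ²(ι, ℂ) :=
  LinearMap.mkContinuous
    { toFun x := ⟨fun i ↦ ⟪φ i, x⟫_ℂ, memℓp_gen (by simpa using summable_norm_inner_sq hφ x)⟩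
      map_add' x y := by ext i; exact inner_add_right _ _ _
      map_smul' c x := by ext i; exact inner_smul_right _ _ _ }
    √B
    fun x ↦ by
      rw [← Real.sqrt_sq (norm_nonneg _), ← Real.sqrt_sq (norm_nonneg x),
        ← Real.sqrt_mul' _ (sq_nonneg _), lp.norm_sq_eq_tsum]
      exact Real.sqrt_le_sqrt ((summable_norm_inner_sq hφ x).tsum_le_of_sum_le (hφ x))

@[simp]
theorem analysisOp_apply (x : E) (i : ι) : analysisOp hφ x i = ⟪φ i, x⟫_ℂ := rfl

theorem norm_analysisOp_sq (x : E) : ‖analysisOp hφ x‖ ^ 2 = ∑' i, ‖⟪φ i, x⟫_ℂ‖ ^ 2 :=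
  lp.norm_sq_eq_tsum _

theorem norm_analysisOp_le : ‖analysisOp hφ‖ ≤ √B :=
  LinearMap.mkContinuous_norm_le _ (Real.sqrt_nonneg B) _

variable [CompleteSpace E]

def frameOp : E →L[ℂ] E := (analysisOp hφ)† ∘L analysisOp hφ

theorem inner_frameOp_self (x : E) :
    ⟪frameOp hφ x, x⟫_ℂ = (‖analysisOp hφ x‖ ^ 2 : ℝ) := by
  rw [frameOp, ContinuousLinearMap.comp_apply, ContinuousLinearMap.adjoint_inner_left,
    inner_self_eq_norm_sq_to_K]
  norm_cast

theorem adjoint_analysisOp_single [DecidableEq ι] (i : ι) (a : ℂ) :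
    ((analysisOp hφ)†) (lp.single 2 i a) = a • φ i := by
  refine ext_inner_right ℂ fun x ↦ ?_
  rw [ContinuousLinearMap.adjoint_inner_left, lp.inner_single_left, analysisOp_apply,
    inner_smul_left, RCLike.inner_apply, mul_comm]

/-- `Ring.inverse` is `0` at non-units; `frameOp` is a unit as soon as `φ` is a frame
(`isUnit_frameOp`). -/
def dualFrame (i : ι) : E := Ring.inverse (frameOp hφ) (φ i)

variable (hlow : ∀ x, A * ‖x‖ ^ 2 ≤ ∑' i, ‖⟪φ i, x⟫_ℂ‖ ^ 2)
include hlow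

theorem mul_norm_sq_le_norm_inner_frameOp (x : E) :
    A * ‖x‖ ^ 2 ≤ ‖⟪frameOp hφ x, x⟫_ℂ‖ := by
  rw [inner_frameOp_self, Complex.norm_real, Real.norm_of_nonneg (sq_nonneg _),
    norm_analysisOp_sq]
  exact hlow x

theorem mul_norm_le_norm_frameOp (x : E) : A * ‖x‖ ≤ ‖frameOp hφ x‖ := by
  rcases eq_or_ne x 0 with rfl | hx
  · simp
  refine le_of_mul_le_mul_right ?_ (norm_pos_iff.mpr hx)
  calc A * ‖x‖ * ‖x‖ = A * ‖x‖ ^ 2 := by ring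
    _ ≤ ‖⟪frameOp hφ x, x⟫_ℂ‖ := mul_norm_sq_le_norm_inner_frameOp hφ hlow x
    _ ≤ ‖frameOp hφ x‖ * ‖x‖ := norm_inner_le_norm _ _

theorem isUnit_frameOp (hA : 0 < A) : IsUnit (frameOp hφ) :=
  ContinuousLinearMap.isUnit_of_forall_le_norm_inner_map _ (c := ⟨A, hA.le⟩) hA fun x ↦ by
    rw [mul_comm]
    exact mul_norm_sq_le_norm_inner_frameOp hφ hlow x

theorem frameOp_dualFrame (hA : 0 < A) (i : ι) : frameOp hφ (dualFrame hφ i) = φ i := by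
  change (frameOp hφ * Ring.inverse (frameOp hφ)) (φ i) = φ i
  rw [Ring.mul_inverse_cancel _ (isUnit_frameOp hφ hlow hA)]
  rfl

/-- With `T = analysisOp hφ`, `x = (T† ∘ T)⁻¹ (T† (T x))`; replacing `T x` by its restriction to
`s` moves `x` into the span of the dual frame vectors indexed by `s`, at a cost controlled by the
coefficients outside `s`. -/
theorem exists_mem_span_dualFrame (hA : 0 < A) (s : Finset ι) (x : E) :
    ∃ w ∈ Submodule.span ℂ (dualFrame hφ '' s),
      A * ‖x - w‖ ≤ √B * √(∑' i : ↥((s : Set ι)ᶜ), ‖⟪φ i, x⟫_ℂ‖ ^ 2) := by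
  classical
  set d : ℓ²(ι, ℂ) := analysisOp hφ x - ∑ i ∈ s, lp.single 2 i ⟪φ i, x⟫_ℂ
  refine ⟨∑ i ∈ s, ⟪φ i, x⟫_ℂ • dualFrame hφ i, ?_, ?_⟩
  · exact Submodule.sum_mem _ fun i hi ↦
      Submodule.smul_mem _ _ (Submodule.subset_span ⟨i, hi, rfl⟩)
  have hS : frameOp hφ (x - ∑ i ∈ s, ⟪φ i, x⟫_ℂ • dualFrame hφ i) = ((analysisOp hφ)†) d := by
    simp only [d, map_sub, map_sum, map_smul, frameOp_dualFrame hφ hlow hA,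
      adjoint_analysisOp_single]
    rfl
  have hd : ‖d‖ ^ 2 = ∑' i, ((s : Set ι)ᶜ).indicator (fun i ↦ ‖⟪φ i, x⟫_ℂ‖ ^ 2) i := by
    rw [lp.norm_sq_eq_tsum]
    refine tsum_congr fun i ↦ ?_
    simp only [d, lp.coeFn_sub, lp.coeFn_sum, Pi.sub_apply, Finset.sum_apply, lp.coeFn_single,
      Finset.sum_pi_single, analysisOp_apply]
    by_cases hi : i ∈ s <;> simp [hi]
  calc A * ‖x - ∑ i ∈ s, ⟪φ i, x⟫_ℂ • dualFrame hφ i‖ ≤ ‖((analysisOp hφ)†) d‖ := by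
        rw [← hS]
        exact mul_norm_le_norm_frameOp hφ hlow _
    _ ≤ ‖(analysisOp hφ)†‖ * ‖d‖ := ((analysisOp hφ)†).le_opNorm d
    _ ≤ √B * √(∑' i : ↥((s : Set ι)ᶜ), ‖⟪φ i, x⟫_ℂ‖ ^ 2) := by
        rw [ContinuousLinearMap.adjoint.norm_map,
          tsum_subtype ((s : Set ι)ᶜ) fun i ↦ ‖⟪φ i, x⟫_ℂ‖ ^ 2, ← hd,
          Real.sqrt_sq (norm_nonneg _)]
        gcongr
        exact norm_analysisOp_le hφ

end Frame

namespace L2RKHS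

variable {α : Type*} [MeasurableSpace α] {ν : Measure α} (H : L2RKHS α ν)

def kernelLp (z : α) : Lp ℂ 2 ν := (H.memL2 _ (H.kernel_mem z)).toLp _

theorem apply_eq_inner {f : α → ℂ} (hf : f ∈ H.carrier) (z : α) :
    f z = ⟪H.kernelLp z, (H.memL2 f hf).toLp f⟫_ℂ := by
  rw [H.reproducing f hf z, L2.inner_def]
  refine integral_congr_ae ?_
  filter_upwards [(H.memL2 _ (H.kernel_mem z)).coeFn_toLp, (H.memL2 f hf).coeFn_toLp]
    with y hk hf'
  rw [kernelLp, hk, hf', RCLike.inner_apply, mul_comm]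

theorem k_eq_inner (z w : α) : H.k w z = ⟪H.kernelLp w, H.kernelLp z⟫_ℂ :=
  H.apply_eq_inner (H.kernel_mem z) w

theorem norm_k_comm (z w : α) : ‖H.k z w‖ = ‖H.k w z‖ := by
  rw [k_eq_inner, k_eq_inner, ← inner_conj_symm, RCLike.norm_conj]

theorem re_k_self (z : α) : (H.k z z).re = ‖H.kernelLp z‖ ^ 2 := by
  rw [k_eq_inner, inner_self_eq_norm_sq_to_K]
  norm_cast

theorem lintegral_nnnorm_sq {f : α → ℂ} (hf : f ∈ H.carrier) :
    ∫⁻ y, (‖f y‖₊ : ℝ≥0∞) ^ 2 ∂ν = ENNReal.ofReal (‖(H.memL2 f hf).toLp f‖ ^ 2) := by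
  rw [← Lp.lintegral_enorm_sq]
  refine lintegral_congr_ae ?_
  filter_upwards [(H.memL2 f hf).coeFn_toLp] with y hy
  rw [hy, enorm_eq_nnnorm]

variable [Nonempty α]

def lpSubmodule : Submodule ℂ (Lp ℂ 2 ν) where
  carrier := {F | ∃ f, ∃ hf : f ∈ H.carrier, F = (H.memL2 f hf).toLp f}
  add_mem' := by
    rintro _ _ ⟨f, hf, rfl⟩ ⟨g, hg, rfl⟩
    exact ⟨f + g, H.add_mem f hf g hg, (MemLp.toLp_add _ _).symm⟩
  zero_mem' := by
    obtain ⟨z⟩ := ‹Nonempty α›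
    refine ⟨_, H.smul_mem 0 _ (H.kernel_mem z), ?_⟩
    rw [MemLp.toLp_const_smul 0 (H.memL2 _ (H.kernel_mem z)), zero_smul]
  smul_mem' := by
    rintro c _ ⟨f, hf, rfl⟩
    exact ⟨c • f, H.smul_mem c f hf, (MemLp.toLp_const_smul c _).symm⟩

/-- The carrier is not assumed to be closed in `L²`; the frame operator lives on its closure. -/
def lpClosure : Submodule ℂ (Lp ℂ 2 ν) := H.lpSubmodule.topologicalClosure

instance : CompleteSpace H.lpClosure :=
  H.lpSubmodule.isClosed_topologicalClosure.completeSpace_coe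

def kernelVec (z : α) : H.lpClosure :=
  ⟨H.kernelLp z, H.lpSubmodule.le_topologicalClosure ⟨_, H.kernel_mem z, rfl⟩⟩

theorem coe_kernelVec (z : α) : (H.kernelVec z : Lp ℂ 2 ν) = H.kernelLp z := rfl

theorem inner_kernelVec (z w : α) : ⟪H.kernelVec w, H.kernelVec z⟫_ℂ = H.k w z :=
  (H.k_eq_inner z w).symm

theorem ae_eq_inner_of_mem_lpClosure {F : Lp ℂ 2 ν} (hF : F ∈ H.lpClosure) :
    ∀ᵐ z ∂ν, F z = ⟪H.kernelLp z, F⟫_ℂ := by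
  obtain ⟨u, hu_mem, hu⟩ := mem_closure_iff_seq_limit.mp
    (show F ∈ closure (H.lpSubmodule : Set (Lp ℂ 2 ν)) from hF)
  choose f hf hfu using hu_mem
  obtain ⟨n, hn, hae⟩ := (tendstoInMeasure_of_tendsto_Lp hu).exists_seq_tendsto_ae
  have hrep : ∀ᵐ z ∂ν, ∀ k, u k z = ⟪H.kernelLp z, u k⟫_ℂ := ae_all_iff.mpr fun k ↦ by
    filter_upwards [(H.memL2 _ (hf k)).coeFn_toLp] with z hz
    rw [hfu k, hz]
    exact H.apply_eq_inner (hf k) z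
  filter_upwards [hrep, hae] with z hz hlim
  rw [funext fun i ↦ hz (n i)] at hlim
  exact tendsto_nhds_unique hlim (tendsto_const_nhds.inner (hu.comp hn.tendsto_atTop))

theorem norm_inner_kernelVec_ae_eq (F : H.lpClosure) :
    ∀ᵐ z ∂ν, ‖⟪F, H.kernelVec z⟫_ℂ‖ = ‖(F : Lp ℂ 2 ν) z‖ := by
  filter_upwards [H.ae_eq_inner_of_mem_lpClosure F.2] with z hz
  rw [hz, Submodule.coe_inner, coe_kernelVec, norm_inner_symm]

theorem dense_lpSubmodule : Dense {F : H.lpClosure | (F : Lp ℂ 2 ν) ∈ H.lpSubmodule} := by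
  refine Subtype.dense_iff.mpr ((H.lpSubmodule.topologicalClosure_coe).trans_subset ?_)
  exact closure_mono fun F hF ↦ ⟨⟨F, H.lpSubmodule.le_topologicalClosure hF⟩, hF, rfl⟩

theorem setLIntegral_ofReal_re_k_self_le (W : Submodule ℂ H.lpClosure) [FiniteDimensional ℂ W]
    (t : Set α) {c : ℝ} (ht : ∀ z ∈ t, ∃ w ∈ W, ‖H.kernelVec z - w‖ ^ 2 ≤ c) :
    ∫⁻ z in t, ENNReal.ofReal (H.k z z).re ∂ν ≤ Module.finrank ℂ W + ENNReal.ofReal c * ν t := by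
  set b := stdOrthonormalBasis ℂ W
  have hmeas (j) : Measurable fun z ↦ ‖((b j : H.lpClosure) : Lp ℂ 2 ν) z‖ₑ ^ 2 :=
    (Lp.stronglyMeasurable _).measurable.enorm.pow_const 2
  have hae : ∀ᵐ z ∂ν, z ∈ t → ENNReal.ofReal (H.k z z).re ≤
      ∑ j, ‖((b j : H.lpClosure) : Lp ℂ 2 ν) z‖ₑ ^ 2 + ENNReal.ofReal c := by
    filter_upwards [ae_all_iff.2 fun j ↦ H.norm_inner_kernelVec_ae_eq (b j)] with z hz hzt
    obtain ⟨w, hw, hwc⟩ := ht z hzt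
    have hz' := norm_sq_le_sum_norm_inner_sq_add_norm_sub_sq b (H.kernelVec z) hw
    calc ENNReal.ofReal (H.k z z).re
        ≤ ENNReal.ofReal (∑ j, ‖⟪(b j : H.lpClosure), H.kernelVec z⟫_ℂ‖ ^ 2 + c) := by
          rw [H.re_k_self]
          exact ENNReal.ofReal_le_ofReal (hz'.trans (by gcongr))
      _ ≤ _ := ENNReal.ofReal_add_le.trans_eq <| by
          rw [ENNReal.ofReal_sum_of_nonneg fun _ _ ↦ sq_nonneg _]
          simp only [hz, ENNReal.ofReal_pow (norm_nonneg _), ofReal_norm]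
  calc ∫⁻ z in t, ENNReal.ofReal (H.k z z).re ∂ν
      ≤ ∫⁻ z in t, (∑ j, ‖((b j : H.lpClosure) : Lp ℂ 2 ν) z‖ₑ ^ 2 + ENNReal.ofReal c) ∂ν :=
        setLIntegral_mono_ae
          ((Finset.measurable_sum _ fun j _ ↦ hmeas j).add_const _).aemeasurable hae
    _ = ∑ j, ∫⁻ z in t, ‖((b j : H.lpClosure) : Lp ℂ 2 ν) z‖ₑ ^ 2 ∂ν
          + ENNReal.ofReal c * ν t := by
        rw [lintegral_add_right _ measurable_const, lintegral_finsetSum _ fun j _ ↦ hmeas j,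
          setLIntegral_const]
    _ ≤ ∑ _j : Fin (Module.finrank ℂ W), 1 + ENNReal.ofReal c * ν t := by
        gcongr with j
        calc _ ≤ ∫⁻ z, ‖((b j : H.lpClosure) : Lp ℂ 2 ν) z‖ₑ ^ 2 ∂ν :=
              setLIntegral_le_lintegral _ _
          _ = 1 := by
            have hj : ‖((b j : H.lpClosure) : Lp ℂ 2 ν)‖ = 1 := b.orthonormal.1 j
            rw [Lp.lintegral_enorm_sq, hj]
            simp
    _ = Module.finrank ℂ W + ENNReal.ofReal c * ν t := by simp

section Sampling

variable {Λ : Set α} {A B : ℝ}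
  (hup : ∀ f ∈ H.carrier, ∑' p : Λ, (‖f p‖₊ : ℝ≥0∞) ^ 2 ≤
    ENNReal.ofReal B * ∫⁻ y, (‖f y‖₊ : ℝ≥0∞) ^ 2 ∂ν)
  (hlow : ∀ f ∈ H.carrier, ENNReal.ofReal A * (∫⁻ y, (‖f y‖₊ : ℝ≥0∞) ^ 2 ∂ν) ≤
    ∑' p : Λ, (‖f p‖₊ : ℝ≥0∞) ^ 2)

include hup in
theorem sum_norm_inner_kernelVec_sq_le (hB : 0 ≤ B) (F : H.lpClosure) (s : Finset Λ) :
    ∑ p ∈ s, ‖⟪H.kernelVec p, F⟫_ℂ‖ ^ 2 ≤ B * ‖F‖ ^ 2 := by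
  obtain ⟨F, hF⟩ := F
  simp only [Submodule.coe_inner, coe_kernelVec, Submodule.coe_norm]
  have hclosed : IsClosed
      {G : Lp ℂ 2 ν | ∑ p ∈ s, ‖⟪H.kernelLp p, G⟫_ℂ‖ ^ 2 ≤ B * ‖G‖ ^ 2} :=
    isClosed_le (by fun_prop) (by fun_prop)
  refine closure_minimal ?_ hclosed hF
  rintro _ ⟨f, hf, rfl⟩
  rw [Set.mem_ofPred_eq, ← ENNReal.ofReal_le_ofReal_iff (by positivity), ENNReal.ofReal_mul hB,
    ← H.lintegral_nnnorm_sq hf, ENNReal.ofReal_sum_of_nonneg fun _ _ ↦ sq_nonneg _]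
  refine le_trans (le_of_eq ?_) ((ENNReal.sum_le_tsum s).trans (hup f hf))
  refine Finset.sum_congr rfl fun p _ ↦ ?_
  rw [← H.apply_eq_inner hf, ENNReal.ofReal_pow (norm_nonneg _), ofReal_norm, enorm_eq_nnnorm]

include hup hlow in
theorem mul_norm_sq_le_tsum_norm_inner_kernelVec_sq (hB : 0 ≤ B) (F : H.lpClosure) :
    A * ‖F‖ ^ 2 ≤ ∑' p : Λ, ‖⟪H.kernelVec p, F⟫_ℂ‖ ^ 2 := by
  have hφ := H.sum_norm_inner_kernelVec_sq_le hup hB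
  rw [← norm_analysisOp_sq hφ]
  refine H.dense_lpSubmodule.induction ?_ (isClosed_le (by fun_prop) (by fun_prop)) F
  rintro ⟨_, -⟩ ⟨f, hf, rfl⟩
  rw [norm_analysisOp_sq hφ, ← ENNReal.ofReal_le_ofReal_iff (tsum_nonneg fun _ ↦ sq_nonneg _),
    ENNReal.ofReal_mul' (sq_nonneg _), Submodule.coe_norm, ← H.lintegral_nnnorm_sq hf,
    ENNReal.ofReal_tsum_of_nonneg (fun _ ↦ sq_nonneg _) (summable_norm_inner_sq hφ _)]
  refine (hlow f hf).trans (le_of_eq (tsum_congr fun p ↦ ?_))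
  rw [Submodule.coe_inner, coe_kernelVec, ← H.apply_eq_inner hf,
    ENNReal.ofReal_pow (norm_nonneg _), ofReal_norm, enorm_eq_nnnorm]

variable [PseudoMetricSpace α] {s ε : ℝ}
  (htail : ∀ z, ∑' p : ↥(Λ \ ball z s), (‖H.k z p‖₊ : ℝ≥0∞) ^ 2 ≤ ENNReal.ofReal (ε ^ 2))

include htail in
theorem tsum_compl_norm_inner_kernelVec_sq_le {x z : α} {r : ℝ} (hz : z ∈ ball x r)
    {F : Finset Λ} (hF : ∀ p : Λ, (p : α) ∈ ball x (r + s) → p ∈ F) :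
    ∑' p : ↥((F : Set Λ)ᶜ), ‖⟪H.kernelVec p, H.kernelVec z⟫_ℂ‖ ^ 2 ≤ ε ^ 2 := by
  have hout (p : ↥((F : Set Λ)ᶜ)) : (p : α) ∈ Λ \ ball z s := by
    refine ⟨p.1.2, fun hp ↦ p.2 (hF _ (mem_ball.2 ?_))⟩
    linarith [dist_triangle (p : α) z x, mem_ball.1 hp, mem_ball.1 hz]
  let e (p : ↥((F : Set Λ)ᶜ)) : ↥(Λ \ ball z s) := ⟨p, hout p⟩
  have he : Function.Injective e := fun p q hpq ↦
    Subtype.ext (Subtype.ext (congrArg Subtype.val hpq :))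
  refine Real.tsum_le_of_sum_le (fun _ ↦ sq_nonneg _) fun t ↦ ?_
  rw [← ENNReal.ofReal_le_ofReal_iff (sq_nonneg ε),
    ENNReal.ofReal_sum_of_nonneg fun _ _ ↦ sq_nonneg _]
  calc ∑ p ∈ t, ENNReal.ofReal (‖⟪H.kernelVec p, H.kernelVec z⟫_ℂ‖ ^ 2)
      = ∑ p ∈ t, (‖H.k z (e p)‖₊ : ℝ≥0∞) ^ 2 := by
        refine Finset.sum_congr rfl fun p _ ↦ ?_
        rw [inner_kernelVec, norm_k_comm, ENNReal.ofReal_pow (norm_nonneg _), ofReal_norm,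
          enorm_eq_nnnorm]
    _ ≤ ∑' p, (‖H.k z (e p)‖₊ : ℝ≥0∞) ^ 2 := ENNReal.sum_le_tsum t
    _ ≤ ∑' q : ↥(Λ \ ball z s), (‖H.k z q‖₊ : ℝ≥0∞) ^ 2 :=
        ENNReal.tsum_comp_le_tsum_of_injective he fun q ↦ (‖H.k z q‖₊ : ℝ≥0∞) ^ 2
    _ ≤ ENNReal.ofReal (ε ^ 2) := htail z

include hup hlow htail in
theorem lintegral_ball_le_count_add (hA : 0 < A) (hB : 0 ≤ B) (x : α) (r : ℝ) :
    ∫⁻ z in ball x r, ENNReal.ofReal (H.k z z).re ∂ν ≤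
      Measure.count (Λ ∩ ball x (r + s)) + ENNReal.ofReal (B * ε ^ 2 / A ^ 2) * ν (ball x r) := by
  classical
  rcases (Λ ∩ ball x (r + s)).infinite_or_finite with hinf | hfin
  · simp [Measure.count_apply_infinite hinf]
  have hφ := H.sum_norm_inner_kernelVec_sq_le hup hB
  have hφlow := H.mul_norm_sq_le_tsum_norm_inner_kernelVec_sq hup hlow hB
  have hpre := hfin.preimage (Subtype.val_injective (p := (· ∈ Λ))).injOn
  set F : Finset Λ := hpre.toFinset
  set W := Submodule.span ℂ (dualFrame hφ '' F)
  have : FiniteDimensional ℂ W := FiniteDimensional.span_of_finite ℂ (F.finite_toSet.image _)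
  refine (H.setLIntegral_ofReal_re_k_self_le W _ (c := B * ε ^ 2 / A ^ 2) fun z hz ↦ ?_).trans ?_
  · obtain ⟨w, hw, hdist⟩ := exists_mem_span_dualFrame hφ hφlow hA F (H.kernelVec z)
    have htail' := H.tsum_compl_norm_inner_kernelVec_sq_le htail hz (F := F) fun p hp ↦ by
      simpa [F] using And.intro p.2 hp
    refine ⟨w, hw, ?_⟩
    rw [le_div_iff₀ (by positivity)]
    calc ‖H.kernelVec z - w‖ ^ 2 * A ^ 2 = (A * ‖H.kernelVec z - w‖) ^ 2 := by ring
      _ ≤ (√B * √(∑' p : ↥((F : Set Λ)ᶜ), ‖⟪H.kernelVec p, H.kernelVec z⟫_ℂ‖ ^ 2)) ^ 2 := by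
        gcongr
      _ ≤ B * ε ^ 2 := by
        rw [mul_pow, Real.sq_sqrt hB, Real.sq_sqrt (tsum_nonneg fun _ ↦ sq_nonneg _)]
        gcongr
  gcongr
  calc (Module.finrank ℂ W : ℝ≥0∞) ≤ F.card := by
        have := finrank_span_finset_le_card (R := ℂ) (F.image (dualFrame hφ))
        rw [Set.finrank, Finset.coe_image] at this
        exact_mod_cast this.trans Finset.card_image_le
    _ = (Subtype.val ⁻¹' (Λ ∩ ball x (r + s)) : Set Λ).encard := by
        rw [← hpre.coe_toFinset, Set.encard_coe_eq_coe_finsetCard]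
        rfl
    _ ≤ (Λ ∩ ball x (r + s)).encard := by
        exact_mod_cast Set.encard_preimage_val_le_encard_right _ _
    _ ≤ _ := Measure.encard_le_count _

include hup hlow htail in
theorem lintegral_ball_le_count_add_mul (hA : 0 < A) (hB : 0 ≤ B) (hs : 0 ≤ s) {C₁ C₂ : ℝ}
    (hdiag : ∀ z, C₁ ≤ (H.k z z).re ∧ (H.k z z).re ≤ C₂) {δ η : ℝ≥0∞}
    (hconst : ENNReal.ofReal (B * ε ^ 2 / A ^ 2) + ENNReal.ofReal C₂ * δ ≤ η * ENNReal.ofReal C₁)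
    {x : α} {ρ : ℝ} (hann : ν (ball x ρ \ ball x (ρ - s)) ≤ δ * ν (ball x ρ)) :
    ∫⁻ z in ball x ρ, ENNReal.ofReal (H.k z z).re ∂ν ≤
      Measure.count (Λ ∩ ball x ρ) + η * ∫⁻ z in ball x ρ, ENNReal.ofReal (H.k z z).re ∂ν := by
  have hcore := H.lintegral_ball_le_count_add hup hlow htail hA hB x (ρ - s)
  rw [sub_add_cancel] at hcore
  calc ∫⁻ z in ball x ρ, ENNReal.ofReal (H.k z z).re ∂ν
      ≤ ∫⁻ z in ball x (ρ - s), ENNReal.ofReal (H.k z z).re ∂ν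
          + ENNReal.ofReal C₂ * ν (ball x ρ \ ball x (ρ - s)) :=
        setLIntegral_le_add_mul_measure_diff (fun z ↦ ENNReal.ofReal_le_ofReal (hdiag z).2) _ _
    _ ≤ Measure.count (Λ ∩ ball x ρ) + ENNReal.ofReal (B * ε ^ 2 / A ^ 2) * ν (ball x ρ)
          + ENNReal.ofReal C₂ * (δ * ν (ball x ρ)) := by
        gcongr
        refine hcore.trans ?_
        gcongr
        linarith
    _ ≤ Measure.count (Λ ∩ ball x ρ) + η * (ENNReal.ofReal C₁ * ν (ball x ρ)) := by
        rw [add_assoc, ← mul_assoc, ← add_mul, ← mul_assoc]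
        gcongr
    _ ≤ _ := by
        gcongr
        exact mul_measure_le_setLIntegral (fun z ↦ ENNReal.ofReal_le_ofReal (hdiag z).1) _

end Sampling

end L2RKHS

theorem WAD.eventually_measure_ball_diff_ball_le (hWAD : WAD μ) (hballs : FiniteBalls μ) (s : ℝ)
    {δ : ℝ} (hδ : 0 < δ) :
    ∀ᶠ ρ in atTop, ∀ x : X, μ (ball x ρ \ ball x (ρ - s)) ≤ ENNReal.ofReal δ * μ (ball x ρ) := by
  set n := ⌈s⌉₊
  set δ' := ENNReal.ofReal δ / (n + 1)
  have hδ' : δ' ≠ ∞ := ENNReal.div_ne_top ENNReal.ofReal_ne_top (by simp)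
  obtain ⟨T, hT⟩ := eventually_atTop.1 <| ENNReal.tendsto_nhds_zero.1 hWAD δ' <|
    ENNReal.div_pos (ENNReal.ofReal_pos.2 hδ).ne' (by simp)
  have hshell (t : ℝ) (ht : T ≤ t) (x : X) :
      μ (ball x (t + 1) \ ball x t) ≤ δ' * μ (ball x t) :=
    (ENNReal.div_le_iff_le_mul (Or.inr hδ') (Or.inl (hballs x t))).1
      ((le_iSup (fun x ↦ μ (ball x (t + 1) \ ball x t) / μ (ball x t)) x).trans (hT t ht))
  filter_upwards [eventually_ge_atTop (T + s)] with ρ hρ x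
  calc μ (ball x ρ \ ball x (ρ - s))
      ≤ ∑ i ∈ Finset.range n, μ (ball x (ρ - s + i + 1) \ ball x (ρ - s + i)) :=
        (measure_mono (ball_diff_ball_subset_biUnion x ρ s)).trans (measure_biUnion_finset_le _ _)
    _ ≤ ∑ _i ∈ Finset.range n, δ' * μ (ball x ρ) := by
        refine Finset.sum_le_sum fun i hi ↦ (hshell _ ?_ x).trans ?_
        · linarith [(Nat.cast_nonneg i : (0 : ℝ) ≤ i)]
        · have : (i : ℝ) < s := Nat.lt_ceil.1 (Finset.mem_range.1 hi)
          gcongr _ * ?_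
          exact measure_mono (ball_subset_ball (by linarith))
    _ ≤ ENNReal.ofReal δ * μ (ball x ρ) := by
        rw [Finset.sum_const, Finset.card_range, nsmul_eq_mul, ← mul_assoc]
        gcongr
        calc (n : ℝ≥0∞) * δ' ≤ (n + 1) * δ' := by gcongr; exact le_self_add
          _ ≤ ENNReal.ofReal δ := ENNReal.mul_div_le

theorem L2RKHS.eventually_one_sub_le_count_div_lintegral [Nonempty X] (H : L2RKHS X μ)
    (hballs : FiniteBalls μ) (hNDB : NDB μ) (hWAD : WAD μ) (hD : H.AxiomD) (hHAP : H.HAP)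
    {Λ : Set X} (hΛ : H.Sampling Λ) {η : ℝ≥0} (hη : 0 < η) :
    ∀ᶠ ρ in atTop, ∀ x : X, 1 - (η : ℝ≥0∞) ≤
      Measure.count (Λ ∩ ball x ρ) / ∫⁻ y in ball x ρ, ENNReal.ofReal ((H.k y y).re) ∂μ := by
  obtain ⟨A, B, hA, hB, hsamp⟩ := hΛ
  obtain ⟨C₁, C₂, hC₁, hC₂, hdiag⟩ := hD
  obtain ⟨r₀, -, hr₀⟩ := hNDB
  -- `ε` and `δ` make each of the two error terms `(C₁ η / 2) μ(B_ρ(x))`.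
  set ε := A * √(C₁ * η / (2 * B))
  set δ := C₁ * η / (2 * C₂)
  have hconst : ENNReal.ofReal (B * ε ^ 2 / A ^ 2) + ENNReal.ofReal C₂ * ENNReal.ofReal δ =
      η * ENNReal.ofReal C₁ := by
    have hε : B * ε ^ 2 / A ^ 2 = C₁ * η / 2 := by
      rw [mul_pow, Real.sq_sqrt (by positivity)]
      field_simp
    rw [hε, ← ENNReal.ofReal_mul hC₂.le, mul_div_assoc', mul_comm 2 C₂,
      mul_div_mul_left _ _ hC₂.ne', ← ENNReal.ofReal_add (by positivity) (by positivity),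
      add_halves, ENNReal.ofReal_mul hC₁.le, ENNReal.ofReal_coe_nnreal, mul_comm]
  obtain ⟨s₀, hs₀⟩ := hHAP Λ ⟨B, hB, fun f hf ↦ (hsamp f hf).2⟩ ε (by positivity)
  -- The HAP radius may be negative; enlarging it only shrinks the tails.
  have hs (z : X) : ∑' p : ↥(Λ \ ball z (max s₀ 0)), (‖H.k z p‖₊ : ℝ≥0∞) ^ 2 ≤
      ENNReal.ofReal (ε ^ 2) :=
    (ENNReal.tsum_mono_subtype (fun q ↦ (‖H.k z q‖₊ : ℝ≥0∞) ^ 2)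
      (Set.sdiff_subset_sdiff_right (ball_subset_ball (le_max_left _ _)))).trans (hs₀ z).le
  filter_upwards [hWAD.eventually_measure_ball_diff_ball_le hballs (max s₀ 0) (δ := δ)
    (by positivity), eventually_ge_atTop r₀] with ρ hann hρ x
  have hμ : 0 < μ (ball x ρ) :=
    hr₀.trans_le ((iInf_le _ x).trans (measure_mono (ball_subset_ball hρ)))
  refine ENNReal.one_sub_le_div_of_le_add (H.lintegral_ball_le_count_add_mul
    (fun f hf ↦ (hsamp f hf).2) (fun f hf ↦ (hsamp f hf).1) hs hA hB.le (le_max_right _ _)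
    hdiag hconst.le (hann x)) ?_ ?_
  · refine ((ENNReal.mul_pos (ENNReal.ofReal_pos.2 hC₁).ne' hμ.ne').trans_le ?_).ne'
    exact mul_measure_le_setLIntegral (fun z ↦ ENNReal.ofReal_le_ofReal (hdiag z).1) _
  · exact ne_top_of_le_ne_top (ENNReal.mul_ne_top ENNReal.ofReal_ne_top (hballs x ρ))
      ((lintegral_mono fun z ↦ ENNReal.ofReal_le_ofReal (hdiag z).2).trans_eq
        (setLIntegral_const _ _))

theorem sampling_density_dimension_free_general (μ : Measure X) (H : L2RKHS X μ)
    (hballs : FiniteBalls μ) (hNDB : NDB μ) (hWAD : WAD μ)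
    (hD : H.AxiomD) (hHAP : H.HAP)
    (Λ : Set X) (hΛ : H.Sampling Λ) :
    1 ≤ liminf (fun r : ℝ => ⨅ x : X,
      Measure.count (Λ ∩ ball x r) / ∫⁻ y in ball x r, ENNReal.ofReal ((H.k y y).re) ∂μ)
      atTop := by
  rcases isEmpty_or_nonempty X with hX | hX
  · simp [iInf_of_empty]
  refine ENNReal.le_of_forall_pos_le_add fun η hη _ ↦ ?_
  rw [← tsub_le_iff_right]
  refine le_liminf_of_le (by isBoundedDefault) ?_
  filter_upwards [H.eventually_one_sub_le_count_div_lintegral hballs hNDB hWAD hD hHAP hΛ hη]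
    with ρ hρ
  exact le_iInf hρ

/-- Dimension-free form of the sampling density theorem. -/
theorem sampling_density_dimension_free (μ : Measure X) (H : L2RKHS X μ)
    (hballs : FiniteBalls μ) (hNDB : NDB μ) (hWAD : WAD μ)
    (hD : H.AxiomD) (hWL : H.WL) (hHAP : H.HAP)
    (Λ : Set X) (hΛ : H.Sampling Λ) :
    1 ≤ liminf (fun r : ℝ => ⨅ x : X,
      Measure.count (Λ ∩ ball x r) / ∫⁻ y in ball x r, ENNReal.ofReal ((H.k y y).re) ∂μ)
      atTop :=
  sampling_density_dimension_free_general μ H hballs hNDB hWAD hD hHAP Λ hΛ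
end
end

section
/- Let (X,d) be a metric space with a measure μ such that every ball has finite measure, satisfying the weak annular decay property: lim_{r→∞} sup_{x∈X} μ(B_{r+1}(x) ∖ B_r(x))/μ(B_r(x)) = 0. Then μ is locally doubling at large scales: there exists r₀ > 0 such that for all r ≥ r₀ there is a constant C_r > 0 with μ(B_{2r}(x)) ≤ C_r · μ(B_r(x)) for all x ∈ X; moreover one may take C_r = 2^{⌈r⌉}. -/
open MeasureTheory Metric Filter Topology ENNReal

noncomputable section

variable {X : Type*} [MeasurableSpace X] [MetricSpace X]

/-!
Once the annular ratio `μ (B_{s+1} x \ B_s x) / μ (B_s x)` is below `1` uniformly in `x`, which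
weak annular decay guarantees for all large `s`, every ball of large radius grows by at most a
factor `2` when its radius increases by `1`. Iterating `⌈r⌉` times from radius `r` reaches radius
`r + ⌈r⌉ ≥ 2r`.
-/

theorem ENNReal.le_of_div_lt_one {a b : ℝ≥0∞} (hb : b ≠ ∞) (h : a / b < 1) : a ≤ b := by
  rcases eq_or_ne a 0 with rfl | ha
  · exact zero_le
  · simpa using ((ENNReal.div_lt_iff (Or.inr ha) (Or.inl hb)).1 h).le

theorem MeasureTheory.measure_le_two_mul_of_measure_diff_div_lt_one {α : Type*}
    [MeasurableSpace α] {μ : Measure α} {s t : Set α} (h : μ (t \ s) / μ s < 1) :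
    μ t ≤ 2 * μ s := by
  rcases eq_or_ne (μ s) ∞ with hs | hs
  · simp [hs]
  calc μ t ≤ μ (t \ s ∪ s) := measure_mono (Set.subset_sdiff_union _ _)
    _ ≤ μ (t \ s) + μ s := measure_union_le _ _
    _ ≤ μ s + μ s := by gcongr ?_ + _; exact ENNReal.le_of_div_lt_one hs h
    _ = 2 * μ s := (two_mul _).symm

theorem le_pow_mul_of_forall_le_mul_add_one {f : ℝ → ℝ≥0∞} {c : ℝ≥0∞} {R : ℝ}
    (hf : ∀ s, R ≤ s → f (s + 1) ≤ c * f s) (k : ℕ) {r : ℝ} (hr : R ≤ r) :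
    f (r + k) ≤ c ^ k * f r := by
  induction k with
  | zero => simp
  | succ n ih =>
    calc f (r + (n + 1 : ℕ)) = f (r + n + 1) := by push_cast; ring_nf
      _ ≤ c * f (r + n) := hf _ (by linarith [(Nat.cast_nonneg n : (0 : ℝ) ≤ n)])
      _ ≤ c * (c ^ n * f r) := by gcongr
      _ = c ^ (n + 1) * f r := by ring

theorem WAD.eventually_measure_ball_add_one_le {μ : Measure X} (hWAD : WAD μ) :
    ∀ᶠ s in atTop, ∀ x : X, μ (ball x (s + 1)) ≤ 2 * μ (ball x s) := by
  filter_upwards [hWAD.eventually_lt_const zero_lt_one] with s hs x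
  exact measure_le_two_mul_of_measure_diff_div_lt_one <|
    (le_iSup (fun x ↦ μ (ball x (s + 1) \ ball x s) / μ (ball x s)) x).trans_lt hs

theorem wad_locally_doubling_general (μ : Measure X) (hWAD : WAD μ) :
    ∃ r₀ : ℝ, 0 < r₀ ∧ ∀ r : ℝ, r₀ ≤ r → ∀ x : X,
      μ (ball x (2 * r)) ≤ (2 : ℝ≥0∞) ^ ⌈r⌉₊ * μ (ball x r) := by
  obtain ⟨R, hR⟩ := eventually_atTop.mp hWAD.eventually_measure_ball_add_one_le
  refine ⟨max R 1, by positivity, fun r hr x ↦ ?_⟩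
  have h2r : 2 * r ≤ r + ⌈r⌉₊ := by linarith [Nat.le_ceil r]
  calc μ (ball x (2 * r)) ≤ μ (ball x (r + ⌈r⌉₊)) := measure_mono (ball_subset_ball h2r)
    _ ≤ 2 ^ ⌈r⌉₊ * μ (ball x r) :=
      le_pow_mul_of_forall_le_mul_add_one (f := fun s ↦ μ (ball x s)) (fun s hs ↦ hR s hs x) _
        ((le_max_left _ _).trans hr)

/-- Weak annular decay implies that the measure is locally doubling at large
scales, with doubling constant `C_r = 2 ^ ⌈r⌉`. -/
theorem wad_locally_doubling (μ : Measure X) (hballs : FiniteBalls μ) (hWAD : WAD μ) :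
    ∃ r₀ : ℝ, 0 < r₀ ∧ ∀ r : ℝ, r₀ ≤ r → ∀ x : X,
      μ (ball x (2 * r)) ≤ (2 : ℝ≥0∞) ^ ⌈r⌉₊ * μ (ball x r) :=
  wad_locally_doubling_general μ hWAD
end
end

section
/- Let ℋ ⊆ L²(X,μ) be a reproducing kernel Hilbert space with kernel k, and let Λ ⊆ X be countable. Assume {k_λ : λ∈Λ} is a Riesz basis for a closed subspace V ⊆ ℋ with biorthogonal basis {g_λ : λ∈Λ} ⊆ V (i.e., ⟨k_λ, g_μ⟩ = δ_{λμ}). Then: (a) for every y ∈ X, the sum Σ_{λ∈Λ} k_λ(y) · conj(g_λ(y)) is real and satisfies 0 ≤ Σ_{λ∈Λ} k_λ(y) · conj(g_λ(y)) ≤ k(y,y); and (b) ⟨g_λ, k_λ⟩ = 1 for all λ ∈ Λ. -/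
open MeasureTheory Metric Filter Topology ENNReal
open scoped Classical

noncomputable section

/-- A reproducing kernel Hilbert space of functions contained in `L²(X,μ)`,
described by its carrier set of functions and its reproducing kernel `k`:
each `k_x = k(·,x)` belongs to the space and `f x = ⟨f, k_x⟩` (the `L²` inner
product) for every member `f`. -/
structure RKHSL2 (X : Type*) [MeasurableSpace X] (μ : MeasureTheory.Measure X) where
  carrier : Set (X → ℂ)
  k : X → X → ℂ
  memL2 : ∀ f ∈ carrier, MemLp f 2 μ
  add_mem : ∀ f ∈ carrier, ∀ g ∈ carrier, f + g ∈ carrier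
  smul_mem : ∀ (c : ℂ), ∀ f ∈ carrier, c • f ∈ carrier
  kernel_mem : ∀ x : X, (fun y => k y x) ∈ carrier
  reproducing : ∀ f ∈ carrier, ∀ x : X, f x = ∫ y, f y * (starRingEnd ℂ) (k y x) ∂μ

variable {X : Type*} [MeasurableSpace X] [MetricSpace X]

variable {μ : Measure X}

/-- Axiom (D): two-sided bounds on the diagonal of the kernel. -/
def RKHSL2.AxiomD (H : RKHSL2 X μ) : Prop :=
  ∃ C₁ C₂ : ℝ, 0 < C₁ ∧ 0 < C₂ ∧ ∀ x : X, C₁ ≤ (H.k x x).re ∧ (H.k x x).re ≤ C₂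

/-- Axiom (WL): weak localization of the kernel. -/
def RKHSL2.WL (H : RKHSL2 X μ) : Prop :=
  ∀ ε : ℝ, 0 < ε → ∃ r : ℝ, ∀ x : X,
    (∫⁻ y in (ball x r)ᶜ, (‖H.k x y‖₊ : ℝ≥0∞) ^ 2 ∂μ) < ENNReal.ofReal (ε ^ 2)

/-- `{k_λ : λ ∈ Λ}` is a Bessel sequence for `H`. -/
def RKHSL2.Bessel (H : RKHSL2 X μ) (Λ : Set X) : Prop :=
  ∃ C : ℝ, 0 < C ∧ ∀ f ∈ H.carrier,
    ∑' lam : Λ, (‖f lam‖₊ : ℝ≥0∞) ^ 2 ≤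
      ENNReal.ofReal C * ∫⁻ y, (‖f y‖₊ : ℝ≥0∞) ^ 2 ∂μ

/-- Axiom (HAP): the homogeneous approximation property. -/
def RKHSL2.HAP (H : RKHSL2 X μ) : Prop :=
  ∀ Λ : Set X, H.Bessel Λ → ∀ ε : ℝ, 0 < ε → ∃ r : ℝ, ∀ x : X,
    ∑' lam : ↥(Λ \ ball x r), (‖H.k x lam‖₊ : ℝ≥0∞) ^ 2 < ENNReal.ofReal (ε ^ 2)

/-- `Λ` is a set of stable sampling for `H`. -/
def RKHSL2.Sampling (H : RKHSL2 X μ) (Λ : Set X) : Prop :=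
  ∃ A B : ℝ, 0 < A ∧ 0 < B ∧ ∀ f ∈ H.carrier,
    ENNReal.ofReal A * (∫⁻ y, (‖f y‖₊ : ℝ≥0∞) ^ 2 ∂μ) ≤ ∑' lam : Λ, (‖f lam‖₊ : ℝ≥0∞) ^ 2 ∧
    ∑' lam : Λ, (‖f lam‖₊ : ℝ≥0∞) ^ 2 ≤ ENNReal.ofReal B * ∫⁻ y, (‖f y‖₊ : ℝ≥0∞) ^ 2 ∂μ

/-- `{k_λ : λ ∈ Λ}` is a Riesz sequence in `H` (equivalently stated via finitely
supported coefficient sequences). -/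
def RKHSL2.RieszSeq (H : RKHSL2 X μ) (Λ : Set X) : Prop :=
  ∃ A B : ℝ, 0 < A ∧ 0 < B ∧ ∀ (F : Finset Λ) (c : Λ → ℂ),
    A * ∑ lam ∈ F, ‖c lam‖ ^ 2 ≤ (∫ y, ‖∑ lam ∈ F, c lam * H.k y lam‖ ^ 2 ∂μ) ∧
    (∫ y, ‖∑ lam ∈ F, c lam * H.k y lam‖ ^ 2 ∂μ) ≤ B * ∑ lam ∈ F, ‖c lam‖ ^ 2

/-! Let `P` be the orthogonal projection onto `V`. On the span of the kernels biorthogonality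
gives the expansion `h = ∑ ⟨g_λ, h⟩ k_λ`. The lower Riesz bound makes the coefficients square
summable, `∑ |⟨g_λ, h⟩|² ≤ A⁻¹ ‖h‖²`, and the upper one makes the synthesis bounded, so the
expansion extends to all `h ∈ V`. As `g_λ ∈ V`, `⟨g_λ, k_y⟩ = ⟨g_λ, P k_y⟩`, and pairing the
expansion of `P k_y` with `k_y` gives
`∑_λ k_λ(y) conj(g_λ(y)) = ⟨k_y, P k_y⟩ = ‖P k_y‖² ≤ ‖k_y‖² = k(y,y)`.
Part (b) is the reproducing property at `λ` together with `g_λ(λ) = 1`. -/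

open Submodule

section Biorthogonal

variable {𝕜 E ι : Type*} [RCLike 𝕜] [NormedAddCommGroup E] [InnerProductSpace 𝕜 E]
  {K G : ι → E}

local notation "⟪" x ", " y "⟫" => inner 𝕜 x y

theorem inner_finsuppSum_smul_of_biorthogonal
    [DecidableEq ι] (hbi : ∀ i j, ⟪K i, G j⟫ = if i = j then 1 else 0) (c : ι →₀ 𝕜) (j : ι) :
    ⟪G j, c.sum fun i a => a • K i⟫ = c j := by
  have hGK : ∀ i, ⟪G j, K i⟫ = if i = j then 1 else 0 := fun i => by
    rw [← inner_conj_symm, hbi]; split_ifs <;> simp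
  simp only [Finsupp.sum, inner_sum, inner_smul_right, hGK, mul_ite, mul_one, mul_zero,
    Finset.sum_ite_eq']
  exact ite_eq_left_iff.mpr fun hj => (Finsupp.notMem_support_iff.mp hj).symm

theorem hasSum_inner_smul_of_mem_span
    [DecidableEq ι] (hbi : ∀ i j, ⟪K i, G j⟫ = if i = j then 1 else 0) {u : E}
    (hu : u ∈ span 𝕜 (Set.range K)) :
    HasSum (fun i => ⟪G i, u⟫ • K i) u := by
  obtain ⟨c, rfl⟩ := Finsupp.mem_span_range_iff_exists_finsupp.mp hu
  simp_rw [inner_finsuppSum_smul_of_biorthogonal hbi]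
  exact hasSum_sum_of_ne_finset_zero fun i hi => by simp [Finsupp.notMem_support_iff.mp hi]

theorem sum_norm_inner_sq_le_of_mem_closure {A : ℝ} (hA : 0 < A)
    (hlow : ∀ (F : Finset ι) (c : ι → 𝕜), A * ∑ i ∈ F, ‖c i‖ ^ 2 ≤ ‖∑ i ∈ F, c i • K i‖ ^ 2)
    [DecidableEq ι] (hbi : ∀ i j, ⟪K i, G j⟫ = if i = j then 1 else 0) {f : E}
    (hf : f ∈ (span 𝕜 (Set.range K)).topologicalClosure) (F : Finset ι) :
    ∑ i ∈ F, ‖⟪G i, f⟫‖ ^ 2 ≤ A⁻¹ * ‖f‖ ^ 2 := by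
  rw [← SetLike.mem_coe, topologicalClosure_coe] at hf
  have hclosed : IsClosed {x : E | ∑ i ∈ F, ‖⟪G i, x⟫‖ ^ 2 ≤ A⁻¹ * ‖x‖ ^ 2} :=
    isClosed_le (by fun_prop) (by fun_prop)
  refine closure_minimal (fun u hu => ?_) hclosed hf
  obtain ⟨c, rfl⟩ := Finsupp.mem_span_range_iff_exists_finsupp.mp hu
  have hsum : (c.sum fun i a => a • K i) = ∑ i ∈ F ∪ c.support, c i • K i :=
    Finset.sum_subset Finset.subset_union_right fun i _ hi => by
      simp [Finsupp.notMem_support_iff.mp hi]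
  simp only [Set.mem_ofPred_eq, inner_finsuppSum_smul_of_biorthogonal hbi]
  rw [hsum, le_inv_mul_iff₀ hA]
  calc A * ∑ i ∈ F, ‖c i‖ ^ 2 ≤ A * ∑ i ∈ F ∪ c.support, ‖c i‖ ^ 2 := by
        refine mul_le_mul_of_nonneg_left ?_ hA.le
        exact Finset.sum_le_sum_of_subset_of_nonneg Finset.subset_union_left
          fun i _ _ => sq_nonneg _
    _ ≤ _ := hlow _ _

variable [CompleteSpace E]

theorem summable_smul_of_summable_norm_sq {B : ℝ} (hB : 0 < B)
    (hup : ∀ (F : Finset ι) (c : ι → 𝕜), ‖∑ i ∈ F, c i • K i‖ ^ 2 ≤ B * ∑ i ∈ F, ‖c i‖ ^ 2)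
    {c : ι → 𝕜} (hc : Summable fun i => ‖c i‖ ^ 2) :
    Summable fun i => c i • K i := by
  rw [summable_iff_vanishing_norm]
  intro ε hε
  obtain ⟨s, hs⟩ := summable_iff_vanishing_norm.mp hc (ε ^ 2 / B) (by positivity)
  refine ⟨s, fun t ht => lt_of_pow_lt_pow_left₀ 2 hε.le ?_⟩
  have hct := hs t ht
  rw [Real.norm_of_nonneg (by positivity)] at hct
  calc ‖∑ i ∈ t, c i • K i‖ ^ 2 ≤ B * ∑ i ∈ t, ‖c i‖ ^ 2 := hup t c
    _ < B * (ε ^ 2 / B) := by gcongr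
    _ = ε ^ 2 := by field_simp

theorem norm_tsum_smul_sq_le {B : ℝ} (hB : 0 < B)
    (hup : ∀ (F : Finset ι) (c : ι → 𝕜), ‖∑ i ∈ F, c i • K i‖ ^ 2 ≤ B * ∑ i ∈ F, ‖c i‖ ^ 2)
    {c : ι → 𝕜} (hc : Summable fun i => ‖c i‖ ^ 2) :
    ‖∑' i, c i • K i‖ ^ 2 ≤ B * ∑' i, ‖c i‖ ^ 2 := by
  refine le_of_tendsto' ((summable_smul_of_summable_norm_sq hB hup hc).hasSum.norm.pow 2)
    fun F => (hup F c).trans ?_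
  gcongr
  exact hc.sum_le_tsum F fun i _ => sq_nonneg _

theorem norm_tsum_inner_smul_le_of_mem_closure {A B : ℝ} (hA : 0 < A) (hB : 0 < B)
    (hlow : ∀ (F : Finset ι) (c : ι → 𝕜), A * ∑ i ∈ F, ‖c i‖ ^ 2 ≤ ‖∑ i ∈ F, c i • K i‖ ^ 2)
    (hup : ∀ (F : Finset ι) (c : ι → 𝕜), ‖∑ i ∈ F, c i • K i‖ ^ 2 ≤ B * ∑ i ∈ F, ‖c i‖ ^ 2)
    [DecidableEq ι] (hbi : ∀ i j, ⟪K i, G j⟫ = if i = j then 1 else 0) {f : E}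
    (hf : f ∈ (span 𝕜 (Set.range K)).topologicalClosure) :
    ‖∑' i, ⟪G i, f⟫ • K i‖ ≤ √(B / A) * ‖f‖ := by
  have hcoef := sum_norm_inner_sq_le_of_mem_closure hA hlow hbi hf
  have hsq : ‖∑' i, ⟪G i, f⟫ • K i‖ ^ 2 ≤ B / A * ‖f‖ ^ 2 :=
    calc ‖∑' i, ⟪G i, f⟫ • K i‖ ^ 2 ≤ B * ∑' i, ‖⟪G i, f⟫‖ ^ 2 :=
          norm_tsum_smul_sq_le hB hup (summable_of_sum_le (fun _ => sq_nonneg _) hcoef)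
      _ ≤ B * (A⁻¹ * ‖f‖ ^ 2) := by gcongr; exact tsum_le_of_sum_le' (by positivity) hcoef
      _ = B / A * ‖f‖ ^ 2 := by ring
  calc ‖∑' i, ⟪G i, f⟫ • K i‖ ≤ √(B / A * ‖f‖ ^ 2) := Real.le_sqrt_of_sq_le hsq
    _ = √(B / A) * ‖f‖ := by rw [Real.sqrt_mul' _ (sq_nonneg _), Real.sqrt_sq (norm_nonneg _)]

theorem hasSum_inner_smul_of_mem_closure {A B : ℝ} (hA : 0 < A) (hB : 0 < B)
    (hlow : ∀ (F : Finset ι) (c : ι → 𝕜), A * ∑ i ∈ F, ‖c i‖ ^ 2 ≤ ‖∑ i ∈ F, c i • K i‖ ^ 2)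
    (hup : ∀ (F : Finset ι) (c : ι → 𝕜), ‖∑ i ∈ F, c i • K i‖ ^ 2 ≤ B * ∑ i ∈ F, ‖c i‖ ^ 2)
    [DecidableEq ι] (hbi : ∀ i j, ⟪K i, G j⟫ = if i = j then 1 else 0) {f : E}
    (hf : f ∈ (span 𝕜 (Set.range K)).topologicalClosure) :
    HasSum (fun i => ⟪G i, f⟫ • K i) f := by
  set V := (span 𝕜 (Set.range K)).topologicalClosure
  set T : E → E := fun h => ∑' i, ⟪G i, h⟫ • K i
  have hsummable : ∀ h ∈ V, Summable fun i => ⟪G i, h⟫ • K i := fun h hh =>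
    summable_smul_of_summable_norm_sq hB hup <| summable_of_sum_le (fun _ => sq_nonneg _)
      (sum_norm_inner_sq_le_of_mem_closure hA hlow hbi hh)
  refine (hsummable f hf).hasSum_iff.mpr (eq_of_forall_dist_le fun ε hε => ?_)
  have hf' : f ∈ closure (span 𝕜 (Set.range K) : Set E) := by rwa [← topologicalClosure_coe]
  obtain ⟨u, hu, hfu⟩ := Metric.mem_closure_iff.mp hf' (ε / (√(B / A) + 1)) (by positivity)
  have huV : u ∈ V := le_topologicalClosure _ hu
  have hTu : T u = u := (hasSum_inner_smul_of_mem_span hbi hu).tsum_eq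
  have hTsub : T (f - u) = T f - u :=
    calc T (f - u) = T f - T u := by
          simp only [T, inner_sub_right, sub_smul]
          exact (hsummable f hf).tsum_sub (hsummable u huV)
      _ = T f - u := by rw [hTu]
  calc dist (T f) f ≤ ‖T f - u‖ + dist u f := by rw [← dist_eq_norm]; exact dist_triangle _ _ _
    _ ≤ √(B / A) * dist f u + dist f u := by
        rw [← hTsub, dist_comm u, dist_eq_norm f u]
        gcongr
        exact norm_tsum_inner_smul_le_of_mem_closure hA hB hlow hup hbi (sub_mem hf huV)
    _ = (√(B / A) + 1) * dist f u := by ring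
    _ ≤ ε := by rw [← le_div_iff₀' (by positivity)]; exact hfu.le

theorem hasSum_inner_mul_inner_of_biorthogonal {A B : ℝ} (hA : 0 < A) (hB : 0 < B)
    (hlow : ∀ (F : Finset ι) (c : ι → 𝕜), A * ∑ i ∈ F, ‖c i‖ ^ 2 ≤ ‖∑ i ∈ F, c i • K i‖ ^ 2)
    (hup : ∀ (F : Finset ι) (c : ι → 𝕜), ‖∑ i ∈ F, c i • K i‖ ^ 2 ≤ B * ∑ i ∈ F, ‖c i‖ ^ 2)
    [DecidableEq ι] (hbi : ∀ i j, ⟪K i, G j⟫ = if i = j then 1 else 0)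
    [(span 𝕜 (Set.range K)).topologicalClosure.HasOrthogonalProjection]
    (hG : ∀ i, G i ∈ (span 𝕜 (Set.range K)).topologicalClosure) (v : E) :
    HasSum (fun i => ⟪v, K i⟫ * ⟪G i, v⟫)
      ((‖(span 𝕜 (Set.range K)).topologicalClosure.starProjection v‖ ^ 2 : ℝ) : 𝕜) := by
  set V := (span 𝕜 (Set.range K)).topologicalClosure
  have hPv : V.starProjection v ∈ V := V.starProjection_apply_mem v
  have hcoef : ∀ i, ⟪G i, v⟫ = ⟪G i, V.starProjection v⟫ := fun i => by
    rw [← V.inner_starProjection_left_eq_right, starProjection_eq_self_iff.mpr (hG i)]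
  have hvPv : ⟪v, V.starProjection v⟫ = ((‖V.starProjection v‖ ^ 2 : ℝ) : 𝕜) := by
    rw [← starProjection_eq_self_iff.mpr hPv, ← V.inner_starProjection_left_eq_right,
      starProjection_eq_self_iff.mpr hPv, inner_self_eq_norm_sq_to_K]
    push_cast; rfl
  have := (hasSum_inner_smul_of_mem_closure hA hB hlow hup hbi hPv).mapL (innerSL 𝕜 v)
  simp only [map_smul, coe_innerSL_apply, smul_eq_mul, ← hcoef, mul_comm] at this
  rwa [hvPv] at this

end Biorthogonal

section L2

variable {α : Type*} [MeasurableSpace α] {μ : Measure α}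

theorem MeasureTheory.Lp.coeFn_finset_sum {E : Type*} [NormedAddCommGroup E] {p : ℝ≥0∞}
    {ι : Type*} (s : Finset ι) (f : ι → Lp E p μ) :
    ⇑(∑ i ∈ s, f i) =ᵐ[μ] ∑ i ∈ s, ⇑(f i) := by
  induction s using Finset.induction_on with
  | empty => simpa using Lp.coeFn_zero E p μ
  | insert a s ha ih =>
    simp only [Finset.sum_insert ha]
    exact (Lp.coeFn_add _ _).trans ((EventuallyEq.refl _ _).add ih)

theorem MeasureTheory.L2.norm_sq_eq_integral_norm_sq {𝕜 : Type*} [RCLike 𝕜] (w : Lp 𝕜 2 μ) :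
    ‖w‖ ^ 2 = ∫ y, ‖w y‖ ^ 2 ∂μ := by
  rw [@norm_sq_eq_re_inner 𝕜, L2.inner_def, ← integral_re (L2.integrable_inner w w)]
  simp

theorem MeasureTheory.L2.ofReal_norm_sq_eq_lintegral {E : Type*} [NormedAddCommGroup E]
    (w : Lp E 2 μ) :
    ENNReal.ofReal (‖w‖ ^ 2) = ∫⁻ y, (‖w y‖₊ : ℝ≥0∞) ^ 2 ∂μ := by
  have := eLpNorm_nnreal_pow_eq_lintegral (f := w) (μ := μ) (p := 2) two_ne_zero
  simp only [NNReal.coe_ofNat, ENNReal.coe_ofNat, ENNReal.rpow_two] at this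
  rw [ENNReal.ofReal_pow (norm_nonneg _), ofReal_norm, Lp.enorm_def, this]
  simp [enorm_eq_nnnorm]

namespace RKHSL2

variable (H : RKHSL2 α μ)

def kernelLp (x : α) : Lp ℂ 2 μ :=
  (H.memL2 _ (H.kernel_mem x)).toLp fun y => H.k y x

theorem inner_kernelLp_toLp {f : α → ℂ} (hf : f ∈ H.carrier) (x : α) :
    inner ℂ (H.kernelLp x) ((H.memL2 f hf).toLp f) = f x := by
  rw [H.reproducing f hf x, L2.inner_def]
  refine integral_congr_ae ?_
  filter_upwards [(H.memL2 _ (H.kernel_mem x)).coeFn_toLp, (H.memL2 f hf).coeFn_toLp]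
    with y hky hfy
  simp [kernelLp, hky, hfy]

theorem inner_kernelLp_kernelLp (x y : α) :
    inner ℂ (H.kernelLp x) (H.kernelLp y) = H.k x y :=
  H.inner_kernelLp_toLp (H.kernel_mem y) x

theorem norm_kernelLp_sq (x : α) : ‖H.kernelLp x‖ ^ 2 = (H.k x x).re := by
  rw [← H.inner_kernelLp_kernelLp, inner_self_eq_norm_sq_to_K]
  norm_cast

theorem coeFn_sum_smul_kernelLp {Λ : Set α} (F : Finset Λ) (c : Λ → ℂ) :
    ⇑(∑ m ∈ F, c m • H.kernelLp m) =ᵐ[μ] fun y => ∑ m ∈ F, c m * H.k y m := by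
  have hterm : ∀ m ∈ F, ⇑(c m • H.kernelLp m) =ᵐ[μ] fun y => c m * H.k y m := fun m _ =>
    (Lp.coeFn_smul _ _).trans ((H.memL2 _ (H.kernel_mem m)).coeFn_toLp.const_smul (c m))
  filter_upwards [Lp.coeFn_finset_sum F fun m => c m • H.kernelLp m,
    (eventually_all_finset F).2 hterm] with y hsum hterm
  simp only [hsum, Finset.sum_apply]
  exact Finset.sum_congr rfl hterm

theorem norm_sum_smul_kernelLp_sq {Λ : Set α} (F : Finset Λ) (c : Λ → ℂ) :
    ‖∑ m ∈ F, c m • H.kernelLp m‖ ^ 2 = ∫ y, ‖∑ m ∈ F, c m * H.k y m‖ ^ 2 ∂μ := by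
  rw [L2.norm_sq_eq_integral_norm_sq]
  refine integral_congr_ae ?_
  filter_upwards [H.coeFn_sum_smul_kernelLp F c] with y hy
  rw [hy]

theorem toLp_mem_closure_span_kernelLp {Λ : Set α} {f : α → ℂ} (hf : f ∈ H.carrier)
    (happrox : ∀ ε : ℝ, 0 < ε → ∃ (F : Finset Λ) (c : Λ → ℂ),
      (∫⁻ y, (‖f y - ∑ m ∈ F, c m * H.k y m‖₊ : ℝ≥0∞) ^ 2 ∂μ) < ENNReal.ofReal ε) :
    (H.memL2 f hf).toLp f ∈
      (span ℂ (Set.range fun m : Λ => H.kernelLp m)).topologicalClosure := by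
  rw [← SetLike.mem_coe, topologicalClosure_coe, Metric.mem_closure_iff]
  intro ε hε
  obtain ⟨F, c, hFc⟩ := happrox (ε ^ 2) (by positivity)
  refine ⟨∑ m ∈ F, c m • H.kernelLp m,
    Submodule.sum_mem _ fun m _ => Submodule.smul_mem _ _ (Submodule.subset_span ⟨m, rfl⟩), ?_⟩
  have hae : ⇑((H.memL2 f hf).toLp f - ∑ m ∈ F, c m • H.kernelLp m) =ᵐ[μ]
      fun y => f y - ∑ m ∈ F, c m * H.k y m :=
    (Lp.coeFn_sub _ _).trans ((H.memL2 f hf).coeFn_toLp.sub (H.coeFn_sum_smul_kernelLp F c))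
  rw [dist_eq_norm, ← pow_lt_pow_iff_left₀ (norm_nonneg _) hε.le two_ne_zero,
    ← ENNReal.ofReal_lt_ofReal_iff (by positivity), L2.ofReal_norm_sq_eq_lintegral]
  refine (lintegral_congr_ae ?_).trans_lt hFc
  filter_upwards [hae] with y hy
  rw [hy]

end RKHSL2

/-- Membership of `g_λ` in `V` (the closed span of the `k_λ`) is encoded as `L²`-approximation
by finite linear combinations of kernels, and biorthogonality `⟨k_λ, g_m⟩ = δ_{λ m}`, via the
reproducing property, as `g_m(λ) = δ_{λ m}`. -/
theorem riesz_biorthogonal_identities_general (μ : Measure X) (H : RKHSL2 X μ)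
    (Λ : Set X)
    (hriesz : H.RieszSeq Λ)
    (g : Λ → X → ℂ) (hgmem : ∀ lam : Λ, g lam ∈ H.carrier)
    (hgV : ∀ (lam : Λ) (ε : ℝ), 0 < ε → ∃ (F : Finset Λ) (c : Λ → ℂ),
      (∫⁻ y, (‖g lam y - ∑ m ∈ F, c m * H.k y m‖₊ : ℝ≥0∞) ^ 2 ∂μ) < ENNReal.ofReal ε)
    (hbi : ∀ lam m : Λ, g m lam = if lam = m then (1 : ℂ) else 0) :
    (∀ y : X, ∃ s : ℝ,
      HasSum (fun lam : Λ => H.k y lam * (starRingEnd ℂ) (g lam y)) (s : ℂ) ∧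
      0 ≤ s ∧ s ≤ (H.k y y).re) ∧
    (∀ lam : Λ, (∫ y, g lam y * (starRingEnd ℂ) (H.k y lam) ∂μ) = 1) := by
  obtain ⟨A, B, hA, hB, hAB⟩ := hriesz
  set V := (span ℂ (Set.range fun m : Λ => H.kernelLp m)).topologicalClosure
  have : CompleteSpace V := (isClosed_topologicalClosure _).completeSpace_coe
  have hKG (l m : Λ) :
      inner ℂ (H.kernelLp l) ((H.memL2 _ (hgmem m)).toLp (g m)) = if l = m then 1 else 0 :=
    (H.inner_kernelLp_toLp (hgmem m) l).trans (hbi l m)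
  refine ⟨fun y => ⟨‖V.starProjection (H.kernelLp y)‖ ^ 2, ?_, sq_nonneg _, ?_⟩, fun l => ?_⟩
  · have hsum := hasSum_inner_mul_inner_of_biorthogonal hA hB
      (fun F c => H.norm_sum_smul_kernelLp_sq F c ▸ (hAB F c).1)
      (fun F c => H.norm_sum_smul_kernelLp_sq F c ▸ (hAB F c).2) hKG
      (fun m => H.toLp_mem_closure_span_kernelLp (hgmem m) (hgV m)) (H.kernelLp y)
    refine hsum.congr_fun fun l => ?_
    rw [H.inner_kernelLp_kernelLp, ← inner_conj_symm, H.inner_kernelLp_toLp (hgmem l)]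
  · rw [← H.norm_kernelLp_sq]
    exact pow_le_pow_left₀ (norm_nonneg _) (V.norm_starProjection_apply_le _) 2
  · rw [← H.reproducing _ (hgmem l), hbi, if_pos rfl]

/-- Identities for a Riesz basis of reproducing kernels `{k_λ}` of a closed
subspace `V ⊆ ℋ` with biorthogonal basis `{g_λ} ⊆ V`.  Membership of `g_λ` in
`V` (the closed span of the `k_λ`) is expressed by `L²`-approximation by finite
linear combinations of kernels, and biorthogonality `⟨k_λ, g_m⟩ = δ_{λ m}` is
expressed via the reproducing property as `g_m(λ) = δ_{λ m}`.  Then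
(a) the sum `∑_λ k_λ(y) conj(g_λ(y))` is a real number `s` with `0 ≤ s ≤ k(y,y)`, and
(b) `⟨g_λ, k_λ⟩ = 1` for all `λ`. -/
theorem riesz_biorthogonal_identities (μ : Measure X) (H : RKHSL2 X μ)
    (Λ : Set X) (hcount : Λ.Countable)
    (hriesz : H.RieszSeq Λ)
    (g : Λ → X → ℂ) (hgmem : ∀ lam : Λ, g lam ∈ H.carrier)
    (hgV : ∀ (lam : Λ) (ε : ℝ), 0 < ε → ∃ (F : Finset Λ) (c : Λ → ℂ),
      (∫⁻ y, (‖g lam y - ∑ m ∈ F, c m * H.k y m‖₊ : ℝ≥0∞) ^ 2 ∂μ) < ENNReal.ofReal ε)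
    (hbi : ∀ lam m : Λ, g m lam = if lam = m then (1 : ℂ) else 0) :
    (∀ y : X, ∃ s : ℝ,
      HasSum (fun lam : Λ => H.k y lam * (starRingEnd ℂ) (g lam y)) (s : ℂ) ∧
      0 ≤ s ∧ s ≤ (H.k y y).re) ∧
    (∀ lam : Λ, (∫ y, g lam y * (starRingEnd ℂ) (H.k y lam) ∂μ) = 1) :=
  riesz_biorthogonal_identities_general μ H Λ hriesz g hgmem hgV hbi
end L2
end
end
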